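/- If b₀, b₁, b₂ are homogeneous elements of S such that θ(b₀)x₀ + θ(b₁)x₁ + θ(b₂)x₂ = 0 in k[x₀,x₁,x₂], then (b₀,b₁,b₂) is congruent modulo (ker θ)·S³ to an S-linear combination of the eight vectors Y₀₀, Y₀₁, Y₁₀, Y₁₁, Y₁₂, Y₂₀, Y₂₁, Y₂₂ listed in the paper (Y₀₂ being omitted since Y₀₂ = Y₁₁ − Y₂₀). -/

import Mathlib

/-!
Read in `k[x₀,x₁,x₂]`, the hypothesis says that `(θ b₀, θ b₁, θ b₂)` is a syzygy of
`(x₀, x₁, x₂)`, so by exactness of the Koszul complex it is `s K₀ + q K₁ + r K₂` with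
`K₀ = (x₁, -x₀, 0)`, `K₁ = (x₂, 0, -x₀)`, `K₂ = (0, x₂, -x₁)`. For the grading by degree mod 2
the `θ bᵢ` are even and the `Kₗ` odd, so `s, q, r` may be replaced by their odd parts. Every
even monomial is a product of the `xᵢxⱼ = θ(xᵢⱼ)`, so an odd polynomial is `∑ₘ xₘ θ(cₘ)`.
Finally `θ(Yₘₗ) = xₘ Kₗ`, and the missing `x₂ K₀` is `θ(Y₁₁ - Y₂₀)`.
-/

open MvPolynomial

noncomputable def theta (k : Type*) [CommRing k] :
    MvPolynomial (Fin 6) k →ₐ[k] MvPolynomial (Fin 3) k :=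
  MvPolynomial.aeval
    ![X 0 * X 0, X 0 * X 1, X 0 * X 2, X 1 * X 1, X 1 * X 2, X 2 * X 2]

/-- The eight vectors `Y₀₀, Y₀₁, Y₁₀, Y₁₁, Y₁₂, Y₂₀, Y₂₁, Y₂₂` in `S³`
(`X 0,…,X 5` stand for `x₀₀, x₀₁, x₀₂, x₁₁, x₁₂, x₂₂`). -/
noncomputable def Yvec (k : Type*) [CommRing k] : Fin 8 → (Fin 3 → MvPolynomial (Fin 6) k) :=
  ![![X 1, -X 0, 0],
    ![X 3, -X 1, 0],
    ![X 2, 0, -X 0],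
    ![X 4, 0, -X 1],
    ![X 5, 0, -X 2],
    ![0, X 2, -X 1],
    ![0, X 4, -X 3],
    ![0, X 5, -X 4]]

section Koszul

variable {σ R : Type*} [CommRing R] [DecidableEq σ]

lemma X_dvd_sub_aeval_update_X_zero (i : σ) (p : MvPolynomial σ R) :
    X i ∣ p - aeval (Function.update X i 0) p := by
  induction p using MvPolynomial.induction_on with
  | C a => simp
  | add p q hp hq => simpa only [map_add, add_sub_add_comm] using dvd_add hp hq
  | mul_X p j hp =>
    rcases eq_or_ne j i with rfl | hji
    · simp
    · rw [map_mul, aeval_X, Function.update_of_ne hji, ← sub_mul]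
      exact hp.mul_right _

lemma exists_of_mul_X_add_mul_X_eq_zero {i j : σ} (hij : i ≠ j) {a b : MvPolynomial σ R}
    (h : a * X i + b * X j = 0) : ∃ s, a = s * X j ∧ b = -(s * X i) := by
  set ε := aeval (R := R) (Function.update (X : σ → MvPolynomial σ R) j 0)
  have hε : ε a * X i = 0 := by simpa [ε, Function.update_of_ne hij] using congrArg ε h
  obtain ⟨s, hs⟩ := X_dvd_sub_aeval_update_X_zero j a
  rw [isRegular_X.right.mul_right_eq_zero_iff.mp hε, sub_zero] at hs
  have hb : (s * X i + b) * X j = 0 := by linear_combination h - X i * hs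
  refine ⟨s, by rw [hs, mul_comm], ?_⟩
  linear_combination isRegular_X.right.mul_right_eq_zero_iff.mp hb

lemma exists_of_mul_X_add_mul_X_add_mul_X_eq_zero {i j l : σ} (hij : i ≠ j) (hil : i ≠ l)
    (hjl : j ≠ l) {a b c : MvPolynomial σ R} (h : a * X i + b * X j + c * X l = 0) :
    ∃ s q r, a = s * X j + q * X l ∧ b = -(s * X i) + r * X l ∧ c = -(q * X i) - r * X j := by
  set ε := aeval (R := R) (Function.update (X : σ → MvPolynomial σ R) l 0)
  obtain ⟨q, hq⟩ := X_dvd_sub_aeval_update_X_zero l a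
  obtain ⟨r, hr⟩ := X_dvd_sub_aeval_update_X_zero l b
  have hε : ε a * X i + ε b * X j = 0 := by
    simpa [ε, Function.update_of_ne hil, Function.update_of_ne hjl] using congrArg ε h
  obtain ⟨s, hsa, hsb⟩ := exists_of_mul_X_add_mul_X_eq_zero hij hε
  have hc : (c + q * X i + r * X j) * X l = 0 := by
    linear_combination h - X i * hq - X j * hr - X i * hsa - X j * hsb
  refine ⟨s, q, r, ?_, ?_, ?_⟩
  · linear_combination hq + hsa
  · linear_combination hr + hsb
  · linear_combination isRegular_X.right.mul_right_eq_zero_iff.mp hc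

end Koszul

section Parity

variable {σ R : Type*} [CommSemiring R]

lemma weightedHomogeneousComponent_mul_of_isWeightedHomogeneous {M : Type*}
    [AddCancelCommMonoid M] {w : σ → M} {ψ : MvPolynomial σ R} {n : M}
    (hψ : IsWeightedHomogeneous w ψ n) (m : M) (φ : MvPolynomial σ R) :
    weightedHomogeneousComponent w (m + n) (φ * ψ) = weightedHomogeneousComponent w m φ * ψ := by
  classical
  let := weightedGradedAlgebra R w
  simp only [← weightedDecomposition.decompose'_apply]
  exact DirectSum.coe_decompose_mul_add_of_right_mem _ hψ

/-- The even (`n = 0`) and odd (`n = 1`) parts with respect to total degree. -/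
noncomputable abbrev parityPart (n : ZMod 2) : MvPolynomial σ R →ₗ[R] MvPolynomial σ R :=
  weightedHomogeneousComponent 1 n

lemma parityPart_mul_X (n : ZMod 2) (p : MvPolynomial σ R) (i : σ) :
    parityPart n (p * X i) = parityPart (n + 1) p * X i := by
  have hn : n + 1 + 1 = n := by fin_cases n <;> rfl
  rw [← weightedHomogeneousComponent_mul_of_isWeightedHomogeneous (isWeightedHomogeneous_X R 1 i),
    Pi.one_apply, hn]

end Parity

section Veronese

variable {k : Type*} [CommRing k]

noncomputable def veroneseVar : Fin 3 → Fin 3 → MvPolynomial (Fin 6) k :=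
  ![![X 0, X 1, X 2], ![X 1, X 3, X 4], ![X 2, X 4, X 5]]

lemma theta_X (m : Fin 6) :
    theta k (X m) = ![X 0 * X 0, X 0 * X 1, X 0 * X 2, X 1 * X 1, X 1 * X 2, X 2 * X 2] m :=
  aeval_X _ m

lemma theta_veroneseVar (i j : Fin 3) : theta k (veroneseVar i j) = X i * X j := by
  fin_cases i <;> fin_cases j <;> simp [veroneseVar, theta_X] <;> ring

lemma isWeightedHomogeneous_theta (u : MvPolynomial (Fin 6) k) :
    IsWeightedHomogeneous (1 : Fin 3 → ZMod 2) (theta k u) 0 := by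
  induction u using MvPolynomial.induction_on with
  | C a => simpa [algHom_C] using isWeightedHomogeneous_C (1 : Fin 3 → ZMod 2) a
  | add p q hp hq => simpa only [map_add] using hp.add hq
  | mul_X p m hp =>
    obtain ⟨i, j, hij⟩ : ∃ i j, X m = veroneseVar (k := k) i j := by
      fin_cases m
      exacts [⟨0, 0, rfl⟩, ⟨0, 1, rfl⟩, ⟨0, 2, rfl⟩, ⟨1, 1, rfl⟩, ⟨1, 2, rfl⟩, ⟨2, 2, rfl⟩]
    rw [map_mul, hij, theta_veroneseVar]
    exact hp.mul ((isWeightedHomogeneous_X k _ i).mul (isWeightedHomogeneous_X k _ j))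

lemma exists_theta_eq_parityPart (p : MvPolynomial (Fin 3) k) :
    (∃ u, theta k u = parityPart 0 p) ∧
      ∃ c : Fin 3 → MvPolynomial (Fin 6) k, parityPart 1 p = ∑ i, theta k (c i) * X i := by
  induction p using MvPolynomial.induction_on with
  | C a =>
    refine ⟨⟨C a, ?_⟩, 0, ?_⟩
    · simp [algHom_C, (isWeightedHomogeneous_C _ a).weightedHomogeneousComponent_same]
    · simp [(isWeightedHomogeneous_C _ a).weightedHomogeneousComponent_ne]
  | add p q hp hq =>
    obtain ⟨⟨u, hu⟩, c, hc⟩ := hp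
    obtain ⟨⟨u', hu'⟩, c', hc'⟩ := hq
    refine ⟨⟨u + u', by rw [map_add, map_add, hu, hu']⟩, c + c', ?_⟩
    simp only [map_add, hc, hc', Pi.add_apply, add_mul, Finset.sum_add_distrib]
  | mul_X p i hp =>
    obtain ⟨⟨u, hu⟩, c, hc⟩ := hp
    refine ⟨⟨∑ j, c j * veroneseVar j i, ?_⟩, Pi.single i u, ?_⟩
    · simp only [parityPart_mul_X, zero_add, hc, map_sum, map_mul, theta_veroneseVar,
        Finset.sum_mul, mul_assoc]
    · rw [parityPart_mul_X, show (1 + 1 : ZMod 2) = 0 from rfl, ← hu]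
      simp [Pi.single_apply, apply_ite (theta k)]

lemma exists_Yvec_combination_of_theta_eq (b s q r : Fin 3 → MvPolynomial (Fin 6) k)
    (h₀ : theta k (b 0) = (∑ m, theta k (s m) * X m) * X 1 + (∑ m, theta k (q m) * X m) * X 2)
    (h₁ : theta k (b 1) = -((∑ m, theta k (s m) * X m) * X 0) + (∑ m, theta k (r m) * X m) * X 2)
    (h₂ : theta k (b 2) = -((∑ m, theta k (q m) * X m) * X 0) - (∑ m, theta k (r m) * X m) * X 1) :
    ∃ c : Fin 8 → MvPolynomial (Fin 6) k, ∀ i : Fin 3,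
      b i - ∑ j : Fin 8, c j * Yvec k j i ∈
        RingHom.ker ((theta k) : MvPolynomial (Fin 6) k →+* MvPolynomial (Fin 3) k) := by
  refine ⟨![s 0, s 1, q 0, q 1 + s 2, q 2, r 0 - s 2, r 1, r 2], fun i => ?_⟩
  rw [RingHom.mem_ker]
  simp only [Fin.sum_univ_three] at h₀ h₁ h₂
  fin_cases i <;> simp [Fin.sum_univ_eight, Yvec, theta_X]
  · linear_combination h₀
  · linear_combination h₁
  · linear_combination h₂

end Veronese

theorem even_syzygy_congruent_to_Y_combination_general (k : Type*) [Field k]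
    (b : Fin 3 → MvPolynomial (Fin 6) k)
    (hsyz : ∑ i : Fin 3, theta k (b i) * X i = 0) :
    ∃ c : Fin 8 → MvPolynomial (Fin 6) k, ∀ i : Fin 3,
      b i - ∑ j : Fin 8, c j * Yvec k j i ∈
        RingHom.ker ((theta k) : MvPolynomial (Fin 6) k →+* MvPolynomial (Fin 3) k) := by
  rw [Fin.sum_univ_three] at hsyz
  obtain ⟨s, q, r, h₀, h₁, h₂⟩ :=
    exists_of_mul_X_add_mul_X_add_mul_X_eq_zero (by decide) (by decide) (by decide) hsyz
  obtain ⟨cs, hs⟩ := (exists_theta_eq_parityPart s).2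
  obtain ⟨cq, hq⟩ := (exists_theta_eq_parityPart q).2
  obtain ⟨cr, hr⟩ := (exists_theta_eq_parityPart r).2
  have heven (i : Fin 3) : theta k (b i) = parityPart 0 (theta k (b i)) :=
    (isWeightedHomogeneous_theta (b i)).weightedHomogeneousComponent_same.symm
  apply exists_Yvec_combination_of_theta_eq b cs cq cr
  · rw [heven, h₀, map_add, parityPart_mul_X, parityPart_mul_X, zero_add, hs, hq]
  · rw [heven, h₁, map_add, map_neg, parityPart_mul_X, parityPart_mul_X, zero_add, hs, hr]
  · rw [heven, h₂, map_sub, map_neg, parityPart_mul_X, parityPart_mul_X, zero_add, hq, hr]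

theorem even_syzygy_congruent_to_Y_combination (k : Type*) [Field k]
    (b : Fin 3 → MvPolynomial (Fin 6) k) (db : Fin 3 → ℕ)
    (hb : ∀ i, (b i).IsHomogeneous (db i))
    (hsyz : ∑ i : Fin 3, theta k (b i) * X i = 0) :
    ∃ c : Fin 8 → MvPolynomial (Fin 6) k, ∀ i : Fin 3,
      b i - ∑ j : Fin 8, c j * Yvec k j i ∈
        RingHom.ker ((theta k) : MvPolynomial (Fin 6) k →+* MvPolynomial (Fin 3) k) :=
  even_syzygy_congruent_to_Y_combination_general k b hsyz
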